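/- arXiv:2207.01448 — 2 statements merged into one kernel-verified Lean document; each statement's English description precedes it below -/
import Mathlib

section
/- If a, b, c are positive integers such that supp(c) ∩ supp(b) is nonempty, supp(c) ∩ supp(a) is empty, and supp(c) \ supp(b) is nonempty, then there exists a positive integer m such that supp(m) ∩ supp(c) is nonempty, supp(m) ∩ supp(b) is empty, and supp(m) \ supp(c) is nonempty. -/
def supp (k : ℕ) : Set ℕ := {i | Nat.testBit k i}

def s2 (n : ℕ) : ℕ := (Nat.digits 2 n).sum

/-! The witness is `m = 2^i + 2^j`, where `i` is a bit of `c` that is not a bit of `b`, and `j`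
lies above every bit of `b` and `c`. -/

theorem supp_two_pow (i : ℕ) : supp (2 ^ i) = {i} := by
  ext k
  simp [supp, Nat.testBit_two_pow, eq_comm]

theorem supp_lor (m n : ℕ) : supp (m ||| n) = supp m ∪ supp n := by
  ext k
  simp [supp]

theorem pos_of_mem_supp {n i : ℕ} (h : i ∈ supp n) : 0 < n := by
  rcases Nat.eq_zero_or_pos n with rfl | hn
  · simp [supp] at h
  · exact hn

theorem notMem_supp_of_le {n i : ℕ} (h : n ≤ i) : i ∉ supp n := by
  have : n < 2 ^ i := (Nat.lt_two_pow_self).trans_le (Nat.pow_le_pow_right two_pos h)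
  simp [supp, Nat.testBit_eq_false_of_lt this]

theorem no_dead_end_general (b c : ℕ)
    (h3 : (supp c \ supp b).Nonempty) :
    ∃ m : ℕ, 0 < m ∧ (supp m ∩ supp c).Nonempty ∧ supp m ∩ supp b = ∅ ∧
      (supp m \ supp c).Nonempty := by
  obtain ⟨i, hic, hib⟩ := h3
  have hjb : b + c ∉ supp b := notMem_supp_of_le (Nat.le_add_right b c)
  have hjc : b + c ∉ supp c := notMem_supp_of_le (Nat.le_add_left c b)
  have hm : supp (2 ^ i ||| 2 ^ (b + c)) = {i, b + c} := by
    rw [supp_lor, supp_two_pow, supp_two_pow, Set.insert_eq]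
  refine ⟨2 ^ i ||| 2 ^ (b + c), pos_of_mem_supp (i := i) (by simp [hm]),
    ⟨i, by simp [hm], hic⟩, ?_, ⟨b + c, by simp [hm], hjc⟩⟩
  rw [hm, Set.eq_empty_iff_forall_notMem]
  rintro k ⟨rfl | rfl, hk⟩ <;> contradiction

theorem no_dead_end (a b c : ℕ) (ha : 0 < a) (hb : 0 < b) (hc : 0 < c)
    (h1 : (supp c ∩ supp b).Nonempty)
    (h2 : supp c ∩ supp a = ∅)
    (h3 : (supp c \ supp b).Nonempty) :
    ∃ m : ℕ, 0 < m ∧ (supp m ∩ supp c).Nonempty ∧ supp m ∩ supp b = ∅ ∧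
      (supp m \ supp c).Nonempty :=
  no_dead_end_general b c h3
end

section
/- Let (a(n)) be a sequence of distinct positive integers and let k be a positive integer with binary weight at least 2. Suppose S is a set of indices i such that for each i ∈ S, a(i) is defined as the least positive integer m, not among a(1),...,a(i-1), satisfying a fixed candidacy predicate P(i, m), and suppose k satisfies P(i, k) for every i ∈ S. If S has at least k elements, then k appears in the sequence, i.e., k = a(i) for some i. -/
theorem greedy_must_choose (a : ℕ → ℕ) (hdist : Function.Injective a)
    (hpos : ∀ n, 1 ≤ n → 0 < a n)
    (k : ℕ) (hk : 0 < k) (hk2 : 2 ≤ s2 k)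
    (P : ℕ → ℕ → Prop) (S : Finset ℕ)
    (hS1 : ∀ i ∈ S, 1 ≤ i)
    (hgreedy : ∀ i ∈ S,
      IsLeast {m : ℕ | 0 < m ∧ P i m ∧ ∀ j, 1 ≤ j → j < i → a j ≠ m} (a i))
    (hcand : ∀ i ∈ S, P i k)
    (hcard : k ≤ S.card) :
    ∃ i, a i = k := by
  by_contra h
  push_neg at h
  have hlt : ∀ i ∈ S, a i < k := by
    intro i hi
    have hle := (hgreedy i hi).2 ⟨hk, hcand i hi, fun j _ _ => h j⟩
    exact lt_of_le_of_ne hle (h i)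
  have hmap : ∀ i ∈ S, a i ∈ Finset.Ico 1 k := by
    intro i hi
    exact Finset.mem_Ico.mpr ⟨hpos i (hS1 i hi), hlt i hi⟩
  have := Finset.card_le_card_of_injOn a hmap (fun x _ y _ hxy => hdist hxy)
  simp [Nat.card_Ico] at this
  omega
end
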